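/- arXiv:2009.10120 — 5 statements merged into one kernel-verified Lean document; each statement's English description precedes it below -/
import Mathlib

section
/- Let A be a commutative ring, P an A-module, and f : P → P an A-linear endomorphism. Let g : P[X] → P[X] be the A[X]-linear map g(m) = X·m − f̃(m), and let ε : P[X] → P_f be the map sending Σ mₙXⁿ to Σ fⁿ(mₙ). Then: (1) g is injective; (2) ε is a surjective A[X]-linear map; (3) the kernel of ε equals the image of g. (Exactness of the characteristic sequence 0 → P[X] →^{X−f} P[X] → P_f → 0.) -/
open Polynomial

/-! Since `X^(n+1) p - f^(n+1) p = X • (X^n p - f^n p) + (X - f)(f^n p)`, every `m` is congruent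
modulo the image of `X - f̃` to the constant `ε m`, so `ker ε ⊆ im (X - f̃)`; the reverse inclusion
holds because `ε` turns both `X •` and `f̃` into `X •` on `P_f`. Injectivity of `X - f̃` is read off
the top coefficient: `(X m - f̃ m)_{d+1} = m_d` when `d` is the degree of `m`. -/

theorem LinearMap.map_polynomial_smul_of_map_X_smul {R M N : Type*} [CommSemiring R]
    [AddCommMonoid M] [Module R M] [Module R[X] M] [IsScalarTower R R[X] M]
    [AddCommMonoid N] [Module R N] [Module R[X] N] [IsScalarTower R R[X] N]
    (φ : M →ₗ[R] N) (hφ : ∀ m, φ ((X : R[X]) • m) = (X : R[X]) • φ m) (p : R[X]) (m : M) :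
    φ (p • m) = p • φ m := by
  induction p using Polynomial.induction_on generalizing m with
  | C a => rw [C_eq_algebraMap, algebraMap_smul, algebraMap_smul, map_smul]
  | add p q hp hq => rw [add_smul, map_add, hp, hq, add_smul]
  | monomial n a h =>
    rw [pow_succ', mul_left_comm, mul_smul, hφ, h, ← mul_smul]

namespace PolynomialModule

variable {A P : Type*} [CommRing A] [AddCommGroup P] [Module A P] (f : P →ₗ[A] P)

theorem X_smul_single (n : ℕ) (p : P) :
    (X : A[X]) • single A n p = single A (n + 1) p := by
  rw [← monomial_one_one_eq_X, monomial_smul_single, one_smul, add_comm]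

theorem coeff_X_smul_succ (m : PolynomialModule A P) (n : ℕ) :
    ((X : A[X]) • m).coeff (n + 1) = m.coeff n := by
  rw [← monomial_one_one_eq_X, monomial_smul_apply]
  simp

theorem coeff_map (m : PolynomialModule A P) (n : ℕ) :
    (map A f m).coeff n = f (m.coeff n) := rfl

noncomputable def evalEnd : PolynomialModule A P →ₗ[A] Module.AEval' f :=
  (Module.AEval'.of f).toLinearMap ∘ₗ Finsupp.lsum A (f ^ ·) ∘ₗ
    (coeffLinearEquiv A A).toLinearMap

theorem evalEnd_apply (m : PolynomialModule A P) :
    evalEnd f m = Module.AEval'.of f (m.coeff.sum fun n p => (f ^ n) p) := rfl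

theorem evalEnd_single (n : ℕ) (p : P) :
    evalEnd f (single A n p) = Module.AEval'.of f ((f ^ n) p) := by
  simp [evalEnd, coeffLinearEquiv]

theorem evalEnd_X_smul (m : PolynomialModule A P) :
    evalEnd f ((X : A[X]) • m) = (X : A[X]) • evalEnd f m := by
  induction m using induction_linear with
  | zero => rw [smul_zero, map_zero, smul_zero]
  | add m n hm hn => rw [smul_add, map_add, hm, hn, map_add, smul_add]
  | single n p =>
    rw [X_smul_single, evalEnd_single, evalEnd_single, Module.AEval'.X_smul_of, pow_succ',
      Module.End.mul_apply]

theorem evalEnd_smul (q : A[X]) (m : PolynomialModule A P) :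
    evalEnd f (q • m) = q • evalEnd f m :=
  (evalEnd f).map_polynomial_smul_of_map_X_smul (evalEnd_X_smul f) q m

theorem evalEnd_map (m : PolynomialModule A P) :
    evalEnd f (map A f m) = (X : A[X]) • evalEnd f m := by
  induction m using induction_linear with
  | zero => rw [map_zero, map_zero, smul_zero]
  | add m n hm hn => rw [map_add, map_add, hm, hn, map_add, smul_add]
  | single n p =>
    rw [map_single, evalEnd_single, evalEnd_single, Module.AEval'.X_smul_of,
      ← Module.End.mul_apply, ← Module.End.mul_apply, ← pow_succ, ← pow_succ']

theorem evalEnd_surjective : Function.Surjective (evalEnd f) := fun y =>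
  ⟨single A 0 ((Module.AEval'.of f).symm y), by simp [evalEnd_single]⟩

noncomputable def xSubMap : PolynomialModule A P →ₗ[A[X]] PolynomialModule A P where
  toFun m := (X : A[X]) • m - map A f m
  map_add' m n := by rw [smul_add, map_add]; abel
  map_smul' q m := by
    rw [RingHom.id_apply, smul_sub, map_smul, Algebra.algebraMap_self, Polynomial.map_id,
      smul_comm]

theorem xSubMap_apply (m : PolynomialModule A P) :
    xSubMap f m = (X : A[X]) • m - map A f m := rfl

theorem xSubMap_injective : Function.Injective (xSubMap f) := by
  rw [← LinearMap.ker_eq_bot, LinearMap.ker_eq_bot']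
  intro m hm
  by_contra hne
  have hs : m.coeff.support.Nonempty := by simpa [Finsupp.support_nonempty_iff] using hne
  set d := m.coeff.support.max' hs
  have htop : m.coeff (d + 1) = 0 := Finsupp.notMem_support_iff.mp fun h => by
    have := m.coeff.support.le_max' _ h
    omega
  have hcoeff : ((X : A[X]) • m).coeff (d + 1) - (map A f m).coeff (d + 1) = 0 :=
    congrArg (fun m => m.coeff (d + 1)) hm
  rw [coeff_X_smul_succ, coeff_map, htop, map_zero, sub_zero] at hcoeff
  exact Finsupp.mem_support_iff.mp (m.coeff.support.max'_mem hs) hcoeff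

theorem evalEnd_xSubMap (m : PolynomialModule A P) : evalEnd f (xSubMap f m) = 0 := by
  rw [xSubMap_apply, map_sub, evalEnd_X_smul, evalEnd_map, sub_self]

theorem sub_single_evalEnd_mem_range (m : PolynomialModule A P) :
    m - single A 0 ((Module.AEval'.of f).symm (evalEnd f m)) ∈ LinearMap.range (xSubMap f) := by
  induction m using induction_linear with
  | zero => simp
  | add m n hm hn =>
    convert add_mem hm hn using 1
    rw [map_add, map_add, single_add]
    abel
  | single n p =>
    rw [evalEnd_single, LinearEquiv.symm_apply_apply]
    induction n with
    | zero => simp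
    | succ n ih =>
      have hstep : single A (n + 1) p - single A 0 ((f ^ (n + 1)) p) =
          (X : A[X]) • (single A n p - single A 0 ((f ^ n) p)) +
            xSubMap f (single A 0 ((f ^ n) p)) := by
        rw [xSubMap_apply, smul_sub, X_smul_single, X_smul_single, map_single, pow_succ',
          Module.End.mul_apply]
        abel
      rw [hstep]
      exact add_mem (Submodule.smul_mem _ _ ih) (LinearMap.mem_range_self _ _)

theorem ker_evalEnd :
    LinearMap.ker (evalEnd f) = (LinearMap.range (xSubMap f)).restrictScalars A := by
  ext m
  constructor
  · intro hm
    simpa [LinearMap.mem_ker.mp hm] using sub_single_evalEnd_mem_range f m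
  · rintro ⟨m, rfl⟩
    exact evalEnd_xSubMap f m

end PolynomialModule

/-- Exactness of the characteristic sequence
`0 → P[X] →^{X−f} P[X] →^{ε} P_f → 0` : the map `g(m) = X·m − f̃(m)` is injective and
`A[X]`-linear, the evaluation map `ε(Σ mₙXⁿ) = Σ fⁿ(mₙ)` is a surjective `A[X]`-linear map
to `P` with `X` acting through `f`, and `ker ε = im g`. -/
theorem stmt0 (A : Type*) [CommRing A] (P : Type*) [AddCommGroup P] [Module A P]
    (f : P →ₗ[A] P)
    (g : PolynomialModule A P → PolynomialModule A P)
    (hg : ∀ m, g m = (X : A[X]) • m - PolynomialModule.map A f m)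
    (ε : PolynomialModule A P → Module.AEval' f)
    (hε : ∀ m : PolynomialModule A P,
      ε m = Module.AEval'.of f (Finsupp.sum m.coeff fun n p => (f ^ n) p)) :
    (IsLinearMap (Polynomial A) g ∧ Function.Injective g) ∧
    (IsLinearMap (Polynomial A) ε ∧ Function.Surjective ε) ∧
    (∀ m, ε m = 0 ↔ m ∈ Set.range g) := by
  obtain rfl : g = PolynomialModule.xSubMap f :=
    funext fun m => (hg m).trans (PolynomialModule.xSubMap_apply f m).symm
  obtain rfl : ε = PolynomialModule.evalEnd f :=
    funext fun m => (hε m).trans (PolynomialModule.evalEnd_apply f m).symm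
  refine ⟨⟨(PolynomialModule.xSubMap f).isLinear, PolynomialModule.xSubMap_injective f⟩,
    ⟨⟨map_add _, PolynomialModule.evalEnd_smul f⟩, PolynomialModule.evalEnd_surjective f⟩,
    fun m => ?_⟩
  rw [← LinearMap.mem_ker, PolynomialModule.ker_evalEnd]
  rfl
end

section
/- Let A be a commutative ring, S ⊆ A[X] a submonoid all of whose elements are monic polynomials, and T = {reverse(p) : p ∈ S}, where for monic p of degree n, reverse(p)(X) = Xⁿ·p(1/X). Let P be an A-module and f : P → P an A-linear endomorphism such that p(f) = 0 for some p ∈ S. Then the map induced on T-localizations by the A[X]-linear map h : P[X] → P[X], h(m) = m − X·f̃(m), is bijective. (The map 1 − fX becomes an isomorphism after localizing at T.) -/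
/-!
If `p(f) = 0` with `n = deg p`, then the `A[X]`-endomorphism `u = X • f̃` of `P[X]` is annihilated
by the homogenization `g(Y) = Σⱼ pⱼ X^(n-j) Yʲ = Xⁿ p(Y/X)`, because `g(X f̃) = Xⁿ p(f̃)` and `p(f̃)` is
`p(f)` applied coefficientwise. Since `Y - 1` divides `g(Y) - g(1)` and `g(1) = reverse p`, the map
`1 - u` divides `reverse p` on both sides in `End(P[X])`, and `reverse p` acts invertibly after
localizing at `T`.
-/

open Polynomial Finset

namespace PolynomialModule

variable {A : Type*} [CommRing A] {P : Type*} [AddCommGroup P] [Module A P]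

lemma endomorphism_ext {φ ψ : Module.End A[X] (PolynomialModule A P)}
    (h : ∀ k m, φ (single A k m) = ψ (single A k m)) : φ = ψ :=
  LinearMap.restrictScalars_injective A <| hom_ext fun k => LinearMap.ext (h k)

noncomputable def mapAlgHom : Module.End A P →ₐ[A] Module.End A[X] (PolynomialModule A P) where
  toFun f :=
    { map A f with
      map_smul' := fun c m => by simpa using map_smul A f c m }
  map_one' := endomorphism_ext fun k m => map_single A _ k m
  map_mul' f g := endomorphism_ext fun k m => by simp [map_single]
  map_zero' := endomorphism_ext fun k m => by simp [map_single]
  map_add' f g := endomorphism_ext fun k m => by simp [map_single, single_add]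
  commutes' a := endomorphism_ext fun k m => by simp [map_single, single_smul]

@[simp]
lemma mapAlgHom_apply (f : Module.End A P) (m : PolynomialModule A P) :
    mapAlgHom f m = map A f m := rfl

end PolynomialModule

namespace Polynomial

theorem exists_one_sub_mul_eq_algebraMap_eval_one {R B : Type*} [CommRing R] [Ring B]
    [Algebra R B] {g : R[X]} {u : B} (hg : aeval u g = 0) :
    ∃ v : B, (1 - u) * v = algebraMap R B (g.eval 1) ∧ v * (1 - u) = algebraMap R B (g.eval 1) := by
  obtain ⟨k, hk⟩ := X_sub_C_dvd_sub_C_eval (a := (1 : R)) (p := g)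
  have hcomm : Commute (1 - u) (aeval u k) := by
    have := (Commute.all (1 - X) k).map (aeval u)
    rwa [map_sub, map_one, aeval_X] at this
  have hfac : (1 - u) * aeval u k = algebraMap R B (g.eval 1) := by
    have := congrArg (aeval u) hk
    simp only [map_sub, aeval_C, hg, map_mul, aeval_X, map_one] at this
    rw [← neg_sub, neg_mul, ← this, zero_sub, neg_neg]
  exact ⟨aeval u k, hfac, hcomm.eq ▸ hfac⟩

variable {R : Type*} [CommRing R]

theorem reverse_eq_sum_range (p : R[X]) :
    p.reverse = ∑ j ∈ range (p.natDegree + 1), C (p.coeff j) * X ^ (p.natDegree - j) := by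
  let reflectHom : R[X] →+ R[X] :=
    ⟨⟨reflect p.natDegree, reflect_zero⟩, fun f g => reflect_add f g _⟩
  calc p.reverse = reflectHom (∑ j ∈ range (p.natDegree + 1), C (p.coeff j) * X ^ j) := by
        rw [← p.as_sum_range_C_mul_X_pow]; rfl
    _ = _ := by
      refine (map_sum reflectHom _ _).trans (sum_congr rfl fun j hj => ?_)
      simp [reflectHom, revAt_le (mem_range_succ_iff.mp hj)]

theorem exists_one_sub_X_smul_mul_eq_reverse {B : Type*} [Ring B] [Algebra R[X] B] [Algebra R B]
    [IsScalarTower R R[X] B] {p : R[X]} {F : B} (hp : aeval F p = 0) :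
    ∃ v : B, (1 - (X : R[X]) • F) * v = algebraMap R[X] B p.reverse ∧
      v * (1 - (X : R[X]) • F) = algebraMap R[X] B p.reverse := by
  let g : R[X][X] :=
    ∑ j ∈ range (p.natDegree + 1), monomial j (C (p.coeff j) * X ^ (p.natDegree - j))
  have hg : aeval ((X : R[X]) • F) g = 0 := by
    have hterm : ∀ j ∈ range (p.natDegree + 1),
        aeval ((X : R[X]) • F) (monomial j (C (p.coeff j) * X ^ (p.natDegree - j))) =
          (X : R[X]) ^ p.natDegree • p.coeff j • F ^ j := by
      intro j hj
      rw [aeval_monomial, ← Algebra.smul_def, _root_.smul_pow, smul_smul,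
        ← algebraMap_smul R[X] (p.coeff j), smul_smul, algebraMap_eq, mul_assoc, ← pow_add,
        Nat.sub_add_cancel (mem_range_succ_iff.mp hj), mul_comm]
    rw [map_sum, sum_congr rfl hterm, ← smul_sum, ← aeval_eq_sum_range, hp, smul_zero]
  have hg1 : g.eval 1 = p.reverse := by
    simp [g, eval_finsetSum, reverse_eq_sum_range]
  simpa only [hg1] using exists_one_sub_mul_eq_algebraMap_eval_one hg

end Polynomial

theorem LocalizedModule.map_bijective_of_mul_eq_algebraMap {R M : Type*} [CommSemiring R]
    [AddCommMonoid M] [Module R M] {S : Submonoid R} {f g : Module.End R M} {s : R} (hs : s ∈ S)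
    (hfg : f * g = algebraMap R _ s) (hgf : g * f = algebraMap R _ s) :
    Function.Bijective (LocalizedModule.map S f) := by
  have hmap : ∀ {φ ψ : Module.End R M}, φ * ψ = algebraMap R _ s →
      map S φ ∘ map S ψ = fun z => s • z := by
    intro φ ψ h
    funext z
    induction z using LocalizedModule.induction_on with
    | h m t =>
      rw [Function.comp_apply, map_mk, map_mk, ← Module.End.mul_apply, h,
        Module.algebraMap_end_apply, smul'_mk]
  have hs_bij : Function.Bijective fun z : LocalizedModule S M => s • z :=
    (Module.End.isUnit_iff _).mp <|
      IsLocalizedModule.map_units (LocalizedModule.mkLinearMap S M) ⟨s, hs⟩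
  exact ⟨.of_comp (f := map S g) (hmap hgf ▸ hs_bij.injective),
    .of_comp (g := map S g) (hmap hfg ▸ hs_bij.surjective)⟩

theorem stmt2_general (A : Type*) [CommRing A] (P : Type*) [AddCommGroup P] [Module A P]
    (f : P →ₗ[A] P) (S : Submonoid (Polynomial A))
    (T : Submonoid (Polynomial A))
    (hT : ∀ q, q ∈ T ↔ ∃ p ∈ S, p.reverse = q)
    (htors : ∃ p ∈ S, (Polynomial.aeval f p : P →ₗ[A] P) = 0)
    (h : PolynomialModule A P →ₗ[Polynomial A] PolynomialModule A P)
    (hh : ∀ m, h m = m - (X : A[X]) • (PolynomialModule.map A f m)) :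
    Function.Bijective (LocalizedModule.map T h) := by
  obtain ⟨p, hpS, hp⟩ := htors
  have h_eq : h = 1 - (X : A[X]) • PolynomialModule.mapAlgHom f :=
    LinearMap.ext fun m => by simp [hh]
  have hpF : aeval (PolynomialModule.mapAlgHom f) p = 0 := by
    rw [aeval_algHom_apply, hp, map_zero]
  obtain ⟨v, hhv, hvh⟩ := exists_one_sub_X_smul_mul_eq_reverse hpF
  rw [← h_eq] at hhv hvh
  exact LocalizedModule.map_bijective_of_mul_eq_algebraMap ((hT _).mpr ⟨p, hpS, rfl⟩) hhv hvh

/-- Let `S ⊆ A[X]` be a submonoid of monic polynomials and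
`T = {reverse(p) : p ∈ S}` the multiplicative set of their reversals. If `f : P → P` is an
`A`-linear endomorphism with `p(f) = 0` for some `p ∈ S`, then the map induced on
`T`-localizations by `h(m) = m − X·f̃(m)` on `P[X]` (the map `1 − fX`) is bijective. -/
theorem stmt2 (A : Type*) [CommRing A] (P : Type*) [AddCommGroup P] [Module A P]
    (f : P →ₗ[A] P) (S : Submonoid (Polynomial A))
    (hS : ∀ p ∈ S, p.Monic)
    (T : Submonoid (Polynomial A))
    (hT : ∀ q, q ∈ T ↔ ∃ p ∈ S, p.reverse = q)
    (htors : ∃ p ∈ S, (Polynomial.aeval f p : P →ₗ[A] P) = 0)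
    (h : PolynomialModule A P →ₗ[Polynomial A] PolynomialModule A P)
    (hh : ∀ m, h m = m - (X : A[X]) • (PolynomialModule.map A f m)) :
    Function.Bijective (LocalizedModule.map T h) :=
  stmt2_general A P f S T hT htors h hh
end

section
/- Let A be a commutative ring and P a finitely generated projective A-module. Then the A-linear map P ⊗_A A[[X]] → (ℕ → P) determined by sending p ⊗ g to the sequence (n ↦ (coefficient of Xⁿ in g) • p) is bijective. (That is, P ⊗_A A[[X]] ≅ ∏_{n=0}^∞ P for finitely generated projective P.) -/
/-!
The map is the composite of `P ⊗ A[[X]] ≅ P ⊗ (ℕ → A)` (coefficients) with the natural map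
`P ⊗ (ι → A) → (ι → P)`. The latter is natural in `P` and bijective for `P = A^k` (where it is
just a rearrangement of `(A^k) ⊗ A^ι ≅ (A^ι)^k`), hence bijective for every retract of some `A^k`,
i.e. for every finitely generated projective `P`.
-/

open TensorProduct

theorem Function.Bijective.of_retract {X Y X' Y' : Type*} {f : X → Y} {g : X' → Y'}
    {i : X → X'} {r : X' → X} {j : Y → Y'} {q : Y' → Y}
    (hri : Function.LeftInverse r i) (hqj : Function.LeftInverse q j)
    (hi : j ∘ f = g ∘ i) (hr : q ∘ g = f ∘ r) (hg : Function.Bijective g) :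
    Function.Bijective f := by
  refine ⟨fun x y hxy => hri.injective (hg.1 ?_), fun y => ?_⟩
  · calc g (i x) = j (f x) := (congrFun hi x).symm
      _ = j (f y) := by rw [hxy]
      _ = g (i y) := congrFun hi y
  · obtain ⟨x', hx'⟩ := hg.2 (j y)
    exact ⟨r x', by rw [← Function.comp_apply (f := f), ← hr, Function.comp_apply, hx', hqj]⟩

namespace TensorProduct

variable {R : Type*} [CommSemiring R] {ι : Type*}

lemma piScalarRightHom_naturality {M N : Type*} [AddCommMonoid M] [Module R M]
    [AddCommMonoid N] [Module R N] (u : M →ₗ[R] N) :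
    u.compLeft ι ∘ₗ piScalarRightHom R R M ι = piScalarRightHom R R N ι ∘ₗ u.rTensor (ι → R) := by
  ext m f i
  simp

lemma piScalarRightHom_pi_bijective (κ : Type*) [Fintype κ] [DecidableEq κ] :
    Function.Bijective (piScalarRightHom R R (κ → R) ι) := by
  have hswap : ⇑(piScalarRightHom R R (κ → R) ι) =
      Function.swap ∘ piScalarRight R R (ι → R) κ ∘ TensorProduct.comm R (κ → R) (ι → R) := by
    funext x i k
    induction x with
    | zero => simp [Function.swap]
    | tmul x f => simp [Function.swap, mul_comm]
    | add x y hx hy => simp_all [Function.swap]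
  rw [hswap]
  exact Function.swap_bijective.comp ((LinearEquiv.bijective _).comp (LinearEquiv.bijective _))

theorem piScalarRightHom_bijective (P : Type*) [AddCommMonoid P] [Module R P]
    [Module.Finite R P] [Module.Projective R P] :
    Function.Bijective (piScalarRightHom R R P ι) := by
  obtain ⟨n, π, s, -, -, hπs⟩ := Module.Finite.exists_comp_eq_id_of_projective R P
  refine Function.Bijective.of_retract (i := s.rTensor (ι → R)) (r := π.rTensor (ι → R))
    (j := s.compLeft ι) (q := π.compLeft ι) (fun x => ?_) (fun f => ?_)
    (congrArg DFunLike.coe (piScalarRightHom_naturality s))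
    (congrArg DFunLike.coe (piScalarRightHom_naturality π))
    (piScalarRightHom_pi_bijective (Fin n))
  · rw [← LinearMap.comp_apply, ← LinearMap.rTensor_comp, hπs, LinearMap.rTensor_id,
      LinearMap.id_apply]
  · funext i
    exact LinearMap.congr_fun hπs (f i)

end TensorProduct

noncomputable def PowerSeries.linearEquivPi (R : Type*) [CommSemiring R] :
    PowerSeries R ≃ₗ[R] (ℕ → R) where
  toFun f n := PowerSeries.coeff n f
  invFun := PowerSeries.mk
  map_add' f g := by ext; simp
  map_smul' a f := by ext; simp
  left_inv f := by ext; simp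
  right_inv f := by ext; simp

/-- For a finitely generated projective module `P` over a commutative ring `A`,
the `A`-linear map `P ⊗[A] A[[X]] → (ℕ → P)` sending `p ⊗ g` to `n ↦ (coeff Xⁿ g) • p`
is bijective, i.e. `P ⊗ A[[X]] ≅ ∏_{n ≥ 0} P`. -/
theorem stmt5 (A : Type*) [CommRing A] (P : Type*) [AddCommGroup P] [Module A P]
    [Module.Finite A P] [Module.Projective A P]
    (Φ : TensorProduct A P (PowerSeries A) →ₗ[A] (ℕ → P))
    (hΦ : ∀ (p : P) (g : PowerSeries A) (n : ℕ),
      Φ (p ⊗ₜ[A] g) n = (PowerSeries.coeff (R := A) n g) • p) :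
    Function.Bijective Φ := by
  have hfactor : Φ = piScalarRightHom A A P ℕ ∘ₗ
      (LinearEquiv.lTensor P (PowerSeries.linearEquivPi A)).toLinearMap :=
    TensorProduct.ext' fun p g => funext fun n => by simp [hΦ, PowerSeries.linearEquivPi]
  rw [hfactor, LinearMap.coe_comp]
  exact (piScalarRightHom_bijective P).comp (LinearEquiv.bijective _)
end

section
/- Let A be a commutative ring, S ⊆ A[t] a submonoid all of whose elements are monic polynomials, and X a bounded chain complex of finitely generated projective A[t]-modules. The following are equivalent: (1) there exists p ∈ S such that the chain map p·id_X is A[t]-linearly chain homotopic to zero; (2) there exists p ∈ S such that the underlying map of complexes of A-modules of p·id_X is chain homotopic to zero through A-linear chain homotopies; (3) there exists p ∈ S such that p·H_q(X) = 0 for all q; (4) there exists p ∈ S such that the localization of H_q(X) at the submonoid of powers of p vanishes for all q. -/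
open CategoryTheory Limits

universe u

/-- Multiplication by a ring element `p` on a module over a commutative ring. -/
def smulHom {R : Type u} [CommRing R] (M : ModuleCat.{u} R) (p : R) : M ⟶ M := ModuleCat.ofHom
  { toFun := fun x => p • x
    map_add' := fun x y => smul_add p x y
    map_smul' := fun r x => by
      show p • (r • x) = r • (p • x)
      rw [smul_smul, smul_smul, mul_comm] }

/-- The chain map `p · id_X` given by multiplication by `p` in each degree. -/
def smulChain {R : Type u} [CommRing R] (X : ChainComplex (ModuleCat.{u} R) ℤ) (p : R) :
    X ⟶ X where
  f i := smulHom (X.X i) p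
  comm' i j _ := by
    ext x
    show (X.d i j).hom (p • x) = p • (X.d i j).hom x
    exact (X.d i j).hom.map_smul p x

instance restrictScalarsAdditive {R : Type u} {S : Type u} [Ring R] [Ring S] (f : R →+* S) :
    (ModuleCat.restrictScalars.{u} f).Additive where
  map_add := ModuleCat.hom_ext (LinearMap.ext fun _ => rfl)

/-!
An `A`-linear null-homotopy `h` of `p · id` still writes `p z = d (h z)` for every cycle `z`,
and cycles and boundaries do not depend on the ring of scalars: this gives (2) ⇒ (3).

Conversely, if every homology class is killed by a power of `p`, we kill `p ^ N · id` degree by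
degree from the bottom. If a chain map `g` vanishes below degree `m`, then `g_m` lands in the
cycles; since `X_m` is finitely generated, a single power `p ^ n` pushes it into the boundaries,
and since `X_m` is projective, `p ^ n g_m = d ∘ y` for some `y`, which makes `p ^ n g` homotopic
to a map vanishing up to degree `m`. Boundedness of `X` stops the induction after finitely many
steps.
-/

namespace HomologicalComplex

variable {R : Type*} [Semiring R] {C ι : Type*} [Category* C] [Preadditive C] [Linear R C]
  {c : ComplexShape ι} {K L : HomologicalComplex C c}

lemma homologyMap_smul (r : R) (φ : K ⟶ L) (i : ι) [K.HasHomology i] [L.HasHomology i] :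
    homologyMap (r • φ) i = r • homologyMap φ i :=
  ShortComplex.homologyMap_smul ((shortComplexFunctor C c i).map φ) r

end HomologicalComplex

theorem Module.Finite.exists_pow_smul_eq_zero {R M : Type*} [CommSemiring R] [AddCommMonoid M]
    [Module R M] [Module.Finite R M] {p : R} (h : ∀ m : M, ∃ n : ℕ, p ^ n • m = 0) :
    ∃ n : ℕ, ∀ m : M, p ^ n • m = 0 := by
  obtain ⟨s, hs⟩ := Module.Finite.fg_top (R := R) (M := M)
  choose n hn using h
  refine ⟨s.sup n, fun m => ?_⟩
  have hkill : p ^ s.sup n ∈ (Submodule.span R (s : Set M)).annihilator := by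
    rw [Submodule.mem_annihilator_span]
    rintro ⟨x, hx⟩
    rw [← Nat.sub_add_cancel (Finset.le_sup hx), pow_add, mul_smul, hn, smul_zero]
  rw [hs] at hkill
  exact Submodule.mem_annihilator.mp hkill m Submodule.mem_top

theorem ModuleCat.exists_pow_smul_eq_zero {R : Type*} [CommRing R] {M N : ModuleCat R}
    [Module.Finite R M] {p : R} (h : ∀ y : N, ∃ n : ℕ, p ^ n • y = 0) (f : M ⟶ N) :
    ∃ n : ℕ, p ^ n • f = 0 := by
  obtain ⟨n, hn⟩ := Module.Finite.exists_pow_smul_eq_zero (M := LinearMap.range f.hom) (p := p)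
    fun y => (h y).imp fun _ hn => Subtype.ext hn
  refine ⟨n, ?_⟩
  ext m
  exact congrArg Subtype.val (hn ⟨f m, m, rfl⟩)

theorem LocalizedModule.subsingleton_powers_iff {R M : Type*} [CommRing R] [AddCommMonoid M]
    [Module R M] {p : R} :
    Subsingleton (LocalizedModule (Submonoid.powers p) M) ↔ ∀ m : M, ∃ n : ℕ, p ^ n • m = 0 := by
  rw [LocalizedModule.subsingleton_iff]
  refine forall_congr' fun m => ⟨?_, fun ⟨n, hn⟩ => ⟨p ^ n, ⟨n, rfl⟩, hn⟩⟩
  rintro ⟨_, ⟨n, rfl⟩, hn⟩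
  exact ⟨n, hn⟩

lemma smulChain_eq_smul_id {R : Type u} [CommRing R] (X : ChainComplex (ModuleCat.{u} R) ℤ)
    (p : R) : smulChain X p = p • 𝟙 X :=
  rfl

section RestrictScalars

variable {ι : Type*} {c : ComplexShape ι}

theorem Homotopy.apply_eq_d_of_d_eq_zero {S : Type*} [Ring S]
    {X Y : HomologicalComplex (ModuleCat S) c} {φ : X ⟶ Y} (H : Homotopy φ 0) {q : ι}
    (x : X.X q) (hx : X.d q (c.next q) x = 0) :
    φ.f q x = Y.d (c.prev q) q (H.hom q (c.prev q) x) := by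
  have h := ConcreteCategory.congr_hom (H.comm q) x
  have hdx : dNext q H.hom x = 0 := by
    change H.hom (c.next q) q (X.d q (c.next q) x) = 0
    rw [hx, map_zero]
  simp only [HomologicalComplex.zero_f_apply, add_zero, ModuleCat.hom_add, LinearMap.add_apply,
    hdx, zero_add] at h
  exact h

variable {R S : Type*} [Ring R]

theorem HomologicalComplex.homologyMap_eq_zero_of_homotopy_restrictScalars [Ring S]
    (f : R →+* S) {X Y : HomologicalComplex (ModuleCat S) c} (φ : X ⟶ Y)
    (H : Homotopy (((ModuleCat.restrictScalars f).mapHomologicalComplex c).map φ) 0) (q : ι) :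
    homologyMap φ q = 0 := by
  rw [← cancel_epi (X.homologyπ q), homologyπ_naturality, Limits.comp_zero]
  ext z
  have hx : X.d q (c.next q) (X.iCycles q z) = 0 := by
    rw [← ConcreteCategory.comp_apply, iCycles_d]
    rfl
  obtain ⟨w, hw⟩ : ∃ w : Y.X (c.prev q), Y.d (c.prev q) q w = φ.f q (X.iCycles q z) :=
    ⟨_, (H.apply_eq_d_of_d_eq_zero (X.iCycles q z) hx).symm⟩
  have hz : cyclesMap φ q z = Y.toCycles (c.prev q) q w := by
    apply (ModuleCat.mono_iff_injective (Y.iCycles q)).1 inferInstance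
    rw [← ConcreteCategory.comp_apply, cyclesMap_i, ← ConcreteCategory.comp_apply, toCycles_i,
      ConcreteCategory.comp_apply, hw]
  rw [ConcreteCategory.comp_apply, hz, ← ConcreteCategory.comp_apply, toCycles_comp_homologyπ]
  rfl

theorem HomologicalComplex.smul_eq_zero_of_homotopy_restrictScalars [CommRing S]
    (f : R →+* S) (X : HomologicalComplex (ModuleCat S) c) (p : S)
    (H : Homotopy (((ModuleCat.restrictScalars f).mapHomologicalComplex c).map (p • 𝟙 X)) 0)
    (q : ι) (x : X.homology q) : p • x = 0 := by
  have h := ConcreteCategory.congr_hom (homologyMap_eq_zero_of_homotopy_restrictScalars f _ H q) x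
  rwa [homologyMap_smul, homologyMap_id] at h

end RestrictScalars

namespace ChainComplex

theorem exists_homotopy_f_eq_zero_of_le {C : Type*} [Category* C] [Preadditive C]
    {K L : ChainComplex C ℤ} (g : K ⟶ L) {m : ℤ} (hg : ∀ i < m, g.f i = 0)
    (y : K.X m ⟶ L.X (m + 1)) (hy : y ≫ L.d (m + 1) m = g.f m) :
    ∃ g' : K ⟶ L, Nonempty (Homotopy g g') ∧ ∀ i ≤ m, g'.f i = 0 := by
  let h : ∀ i j, (ComplexShape.down ℤ).Rel j i → (K.X i ⟶ L.X j) := fun i j hij =>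
    if hi : i = m then (K.XIsoOfEq hi).hom ≫ y ≫ (L.XIsoOfEq (by simp at hij; omega)).hom
    else 0
  refine ⟨g - Homotopy.nullHomotopicMap' h,
    ⟨Homotopy.equivSubZero.symm ((Homotopy.ofEq (sub_sub_cancel _ _)).trans
      (Homotopy.nullHomotopy' h))⟩, fun i hi => ?_⟩
  rw [HomologicalComplex.sub_f_apply, Homotopy.nullHomotopicMap'_f (c := ComplexShape.down ℤ)
    (k₂ := i + 1) (k₀ := i - 1) (by simp) (by simp)]
  have h_below : h (i - 1) i (by simp) = 0 := dif_neg (by omega)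
  rcases hi.lt_or_eq with hi | rfl
  · simp [h, h_below, hg i hi, show i ≠ m by omega]
  · simp [h, h_below, hy]

theorem exists_comp_d_eq_of_liftCycles_comp_homologyπ_eq_zero {C : Type*} [Category* C]
    [Abelian C] (K : ChainComplex C ℤ) {P : C} [Projective P] {m : ℤ} (x : P ⟶ K.X m)
    (hx : x ≫ K.d m (m - 1) = 0)
    (h : K.liftCycles x (m - 1) (by simp) hx ≫ K.homologyπ m = 0) :
    ∃ y : P ⟶ K.X (m + 1), y ≫ K.d (m + 1) m = x := by
  rw [K.liftCycles_comp_homologyπ_eq_zero_iff_up_to_refinements (m + 1) m (m - 1) (by simp)]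
    at h
  obtain ⟨A', π, _, x₁, fac⟩ := h
  -- `x` lifts along `d` after precomposition with an epi `π : A' ⟶ P`, split as `P` is projective.
  exact ⟨Projective.factorThru (𝟙 P) π ≫ x₁, by
    rw [Category.assoc, ← fac, Projective.factorThru_comp_assoc, Category.id_comp]⟩

variable {R : Type*} [CommRing R] {K L : ChainComplex (ModuleCat R) ℤ} {p : R}

theorem exists_homotopy_pow_smul_f_eq_zero_of_le (g : K ⟶ L) {m : ℤ} [Module.Finite R (K.X m)]
    [Module.Projective R (K.X m)] (htor : ∀ x : L.homology m, ∃ n : ℕ, p ^ n • x = 0)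
    (hg : ∀ i < m, g.f i = 0) :
    ∃ (n : ℕ) (g' : K ⟶ L), Nonempty (Homotopy (p ^ n • g) g') ∧ ∀ i ≤ m, g'.f i = 0 := by
  have hd : g.f m ≫ L.d m (m - 1) = 0 := by
    rw [g.comm, hg (m - 1) (by omega), Limits.comp_zero]
  obtain ⟨n, hn⟩ := ModuleCat.exists_pow_smul_eq_zero htor
    (L.liftCycles (g.f m) (m - 1) (by simp) hd ≫ L.homologyπ m)
  have hd' : (p ^ n • g).f m ≫ L.d m (m - 1) = 0 := by
    rw [HomologicalComplex.smul_f_apply, Linear.smul_comp, hd, smul_zero]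
  obtain ⟨y, hy⟩ := L.exists_comp_d_eq_of_liftCycles_comp_homologyπ_eq_zero _ hd' (by
    rw [← hn, ← Linear.smul_comp]
    congr 1
    rw [← cancel_mono (L.iCycles m)]
    simp)
  exact ⟨n, exists_homotopy_f_eq_zero_of_le (p ^ n • g) (fun i hi => by simp [hg i hi]) y hy⟩

theorem exists_homotopy_pow_smul_zero (g : K ⟶ L) {a b : ℤ}
    (hK : ∀ i, (i < a ∨ b < i) → IsZero (K.X i)) [∀ i, Module.Finite R (K.X i)]
    [∀ i, Module.Projective R (K.X i)] (htor : ∀ q (x : L.homology q), ∃ n : ℕ, p ^ n • x = 0) :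
    ∃ N : ℕ, Nonempty (Homotopy (p ^ N • g) 0) := by
  have step : ∀ k : ℕ, ∃ (N : ℕ) (g' : K ⟶ L),
      Nonempty (Homotopy (p ^ N • g) g') ∧ ∀ i < a + k, g'.f i = 0 := by
    intro k
    induction k with
    | zero => exact ⟨0, p ^ 0 • g, ⟨Homotopy.refl _⟩,
        fun i hi => (hK i (Or.inl (by simpa using hi))).eq_of_src _ _⟩
    | succ k ih =>
      obtain ⟨N, g', ⟨H⟩, hg'⟩ := ih
      obtain ⟨n, g'', ⟨H'⟩, hg''⟩ := exists_homotopy_pow_smul_f_eq_zero_of_le g' (htor _) hg'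
      refine ⟨n + N, g'', ⟨?_⟩, fun i hi => hg'' i (by push_cast at hi; omega)⟩
      rw [pow_add, mul_smul]
      exact (H.smul _).trans H'
  obtain ⟨N, g', ⟨H⟩, hg'⟩ := step (b + 1 - a).toNat
  have hg'0 : g' = 0 := by
    ext i : 1
    by_cases hi : i < a + (b + 1 - a).toNat
    · exact hg' i hi
    · exact (hK i (Or.inr (by omega))).eq_of_src _ _
  exact ⟨N, ⟨H.trans (Homotopy.ofEq hg'0)⟩⟩

end ChainComplex

theorem stmt13_general (A : Type u) [CommRing A] (S : Submonoid (Polynomial A))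
    (X : ChainComplex (ModuleCat.{u} (Polynomial A)) ℤ)
    (hbdd : ∃ a b : ℤ, ∀ i, (i < a ∨ b < i) → IsZero (X.X i))
    (hfg : ∀ i, Module.Finite (Polynomial A) (X.X i) ∧
      Module.Projective (Polynomial A) (X.X i)) :
    ((∃ p ∈ S, Nonempty (Homotopy (smulChain X p) 0)) ↔
      (∃ p ∈ S, Nonempty (Homotopy
        (((ModuleCat.restrictScalars.{u} (algebraMap A (Polynomial A))).mapHomologicalComplex
          (ComplexShape.down ℤ)).map (smulChain X p)) 0))) ∧
    ((∃ p ∈ S, Nonempty (Homotopy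
        (((ModuleCat.restrictScalars.{u} (algebraMap A (Polynomial A))).mapHomologicalComplex
          (ComplexShape.down ℤ)).map (smulChain X p)) 0)) ↔
      (∃ p ∈ S, ∀ (q : ℤ) (x : X.homology q), p • x = 0)) ∧
    ((∃ p ∈ S, ∀ (q : ℤ) (x : X.homology q), p • x = 0) ↔
      (∃ p ∈ S, ∀ q : ℤ,
        Subsingleton (LocalizedModule (Submonoid.powers p) (X.homology q)))) := by
  obtain ⟨a, b, hX⟩ := hbdd
  have := fun i => (hfg i).1
  have := fun i => (hfg i).2
  simp only [smulChain_eq_smul_id, LocalizedModule.subsingleton_powers_iff]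
  set F := (ModuleCat.restrictScalars.{u} (algebraMap A (Polynomial A))).mapHomologicalComplex
    (ComplexShape.down ℤ)
  have h12 (p : Polynomial A) : Nonempty (Homotopy (p • 𝟙 X) 0) →
      Nonempty (Homotopy (F.map (p • 𝟙 X)) 0) := fun ⟨H⟩ =>
    ⟨(ModuleCat.restrictScalars _).mapHomotopy H |>.trans (Homotopy.ofEq (F.map_zero _ _))⟩
  have h23 (p : Polynomial A) : Nonempty (Homotopy (F.map (p • 𝟙 X)) 0) →
      ∀ q (x : X.homology q), p • x = 0 := fun ⟨H⟩ =>
    HomologicalComplex.smul_eq_zero_of_homotopy_restrictScalars _ X p H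
  have h34 (p : Polynomial A) (h : ∀ q (x : X.homology q), p • x = 0) :
      ∀ q (x : X.homology q), ∃ n : ℕ, p ^ n • x = 0 :=
    fun q x => ⟨1, by rw [pow_one, h q x]⟩
  have h41 : (∃ p ∈ S, ∀ q (x : X.homology q), ∃ n : ℕ, p ^ n • x = 0) →
      ∃ p ∈ S, Nonempty (Homotopy (p • 𝟙 X) 0) := fun ⟨p, hp, htor⟩ =>
    have ⟨N, hN⟩ := ChainComplex.exists_homotopy_pow_smul_zero (𝟙 X) hX htor
    ⟨p ^ N, pow_mem hp N, hN⟩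
  have mono {P Q : Polynomial A → Prop} (h : ∀ p, P p → Q p) :
      (∃ p ∈ S, P p) → ∃ p ∈ S, Q p :=
    Exists.imp fun p => And.imp_right (h p)
  exact ⟨⟨mono h12, h41 ∘ mono h34 ∘ mono h23⟩, ⟨mono h23, mono h12 ∘ h41 ∘ mono h34⟩,
    ⟨mono h34, mono h23 ∘ mono h12 ∘ h41⟩⟩

/-- For a bounded complex `X` of finitely generated projective `A[t]`-modules
and a submonoid `S ⊆ A[t]` of monic polynomials, the following are equivalent:
(1) some `p ∈ S` has `p·id_X` chain homotopic to zero `A[t]`-linearly;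
(2) some `p ∈ S` has the underlying `A`-linear map of `p·id_X` chain homotopic to zero
through `A`-linear homotopies;
(3) some `p ∈ S` kills all homology of `X`;
(4) for some `p ∈ S` the localization of all homology of `X` at the powers of `p` vanishes. -/
theorem stmt13 (A : Type u) [CommRing A] (S : Submonoid (Polynomial A))
    (hS : ∀ p ∈ S, p.Monic)
    (X : ChainComplex (ModuleCat.{u} (Polynomial A)) ℤ)
    (hbdd : ∃ a b : ℤ, ∀ i, (i < a ∨ b < i) → IsZero (X.X i))
    (hfg : ∀ i, Module.Finite (Polynomial A) (X.X i) ∧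
      Module.Projective (Polynomial A) (X.X i)) :
    ((∃ p ∈ S, Nonempty (Homotopy (smulChain X p) 0)) ↔
      (∃ p ∈ S, Nonempty (Homotopy
        (((ModuleCat.restrictScalars.{u} (algebraMap A (Polynomial A))).mapHomologicalComplex
          (ComplexShape.down ℤ)).map (smulChain X p)) 0))) ∧
    ((∃ p ∈ S, Nonempty (Homotopy
        (((ModuleCat.restrictScalars.{u} (algebraMap A (Polynomial A))).mapHomologicalComplex
          (ComplexShape.down ℤ)).map (smulChain X p)) 0)) ↔
      (∃ p ∈ S, ∀ (q : ℤ) (x : X.homology q), p • x = 0)) ∧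
    ((∃ p ∈ S, ∀ (q : ℤ) (x : X.homology q), p • x = 0) ↔
      (∃ p ∈ S, ∀ q : ℤ,
        Subsingleton (LocalizedModule (Submonoid.powers p) (X.homology q)))) :=
  stmt13_general A S X hbdd hfg
end

section
/- Let A be a commutative ring and T ⊆ A[X] a submonoid of the multiplicative monoid of A[X] each of whose elements has constant coefficient 1. Then every element of T is a non-zero-divisor in A[X], the image of every element of T in the formal power series ring A[[X]] is a unit, and the induced ring homomorphism from the localization T⁻¹A[X] to A[[X]] is injective. -/
open Polynomial

/-!
A polynomial with constant coefficient `1` becomes a unit in `A⟦X⟧`, and `A[X] → A⟦X⟧` is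
injective. Hence such a polynomial is already a non-zero-divisor in `A[X]`; and any ring
homomorphism that is injective on `R` induces an injective map on a localization of `R`, since
`a/s` and `b/t` are identified exactly when `a t = b s` holds in the target, hence in `R`.
-/

theorem IsLocalization.lift_injective_of_injective {R S P : Type*} [CommSemiring R]
    [CommSemiring S] [CommSemiring P] [Algebra R S] {M : Submonoid R} [IsLocalization M S]
    {g : R →+* P} (hg : ∀ y : M, IsUnit (g y)) (hinj : Function.Injective g) :
    Function.Injective (IsLocalization.lift (S := S) hg) :=
  (IsLocalization.lift_injective_iff hg).2 fun x y =>
    ⟨fun h => by simpa only [IsLocalization.lift_eq] using congrArg (IsLocalization.lift hg) h,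
      fun h => congrArg _ (hinj h)⟩

namespace Polynomial

theorem coeToPowerSeries.ringHom_injective {A : Type*} [CommSemiring A] :
    Function.Injective (coeToPowerSeries.ringHom : A[X] →+* PowerSeries A) :=
  coe_injective A

theorem isUnit_coe_iff {A : Type*} [CommRing A] {p : A[X]} :
    IsUnit (p : PowerSeries A) ↔ IsUnit (p.coeff 0) := by
  rw [PowerSeries.isUnit_iff_constantCoeff, constantCoeff_coe]

end Polynomial

/-- If `T ⊆ A[X]` is a submonoid all of whose elements have constant
coefficient `1`, then every element of `T` is a non-zero-divisor in `A[X]`, the image of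
every element of `T` in `A[[X]]` is a unit, and the induced ring homomorphism
`T⁻¹A[X] → A[[X]]` is injective. -/
theorem stmt18 (A : Type*) [CommRing A] (T : Submonoid (Polynomial A))
    (hT : ∀ p ∈ T, p.coeff 0 = 1) :
    (∀ p ∈ T, p ∈ nonZeroDivisors (Polynomial A)) ∧
    (∀ p ∈ T, IsUnit ((Polynomial.coeToPowerSeries.ringHom : Polynomial A →+* PowerSeries A) p)) ∧
    ∀ (h : ∀ t : T, IsUnit ((Polynomial.coeToPowerSeries.ringHom :
        Polynomial A →+* PowerSeries A) t)),
      Function.Injective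
        (IsLocalization.lift (S := Localization T)
          (g := (Polynomial.coeToPowerSeries.ringHom : Polynomial A →+* PowerSeries A)) h) := by
  have hunit : ∀ p ∈ T, IsUnit (coeToPowerSeries.ringHom p : PowerSeries A) := fun p hp => by
    rw [coeToPowerSeries.ringHom_apply, isUnit_coe_iff, hT p hp]
    exact isUnit_one
  refine ⟨fun p hp => ?_, hunit, fun h =>
    IsLocalization.lift_injective_of_injective h coeToPowerSeries.ringHom_injective⟩
  exact mem_nonZeroDivisors_of_injective coeToPowerSeries.ringHom_injective
    (hunit p hp).mem_nonZeroDivisors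
end
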